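/- arXiv:1805.02615 — 9 statements merged into one kernel-verified Lean document; each statement's English description precedes it below -/
import Mathlib

section
/- Let p be an odd prime, n ≥ 2 an integer, and A an integer with 0 < A < n. Fix i with 0 ≤ i < n and let I_i = {x : 1 ≤ x ≤ p-1, x ≡ i (mod n)}. Then the set of residues mod n of the least positive residues of A·x mod p, as x ranges over I_i, has cardinality at most A. In particular, if A < n then there exists j with 0 ≤ j < n such that no x ∈ I_i has (A·x mod p) ≡ j (mod n). -/
/-!
Write `A * x = p * t + (A * x % p)` with `t = A * x / p`. For `0 ≤ x < p` and `A > 0` the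
quotient `t` lies in `[0, A)`, and `A * x ≡ A * i (mod n)` when `x ≡ i (mod n)`, so
`(A * x % p) % n = (A * i - p * t) % n` takes at most `A` values. Since `A < n`, some residue
mod `n` is missed.
-/

namespace Int

lemma mul_ediv_mem_Ico {A p x : ℤ} (hA : 0 < A) (hx : 0 ≤ x) (hxp : x < p) :
    A * x / p ∈ Finset.Ico 0 A := by
  have hp : 0 < p := hx.trans_lt hxp
  rw [Finset.mem_Ico, Int.ediv_lt_iff_lt_mul hp]
  exact ⟨Int.ediv_nonneg (by positivity) hp.le, by nlinarith⟩

lemma mul_emod_emod_eq_of_modEq {A p n x i : ℤ} (hxi : x ≡ i [ZMOD n]) :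
    A * x % p % n = (A * i - p * (A * x / p)) % n := by
  rw [Int.emod_def (A * x) p]
  exact (hxi.mul_left A).sub_right _

lemma card_image_mul_emod_emod_le {A p n i : ℤ} (hA : 0 < A) (s : Finset ℤ)
    (hs : ∀ x ∈ s, 0 ≤ x ∧ x < p ∧ x ≡ i [ZMOD n]) :
    ((s.image fun x => A * x % p % n).card : ℤ) ≤ A := by
  have hsub : s.image (fun x => A * x % p % n) ⊆
      (Finset.Ico 0 A).image fun t => (A * i - p * t) % n := by
    intro y hy
    obtain ⟨x, hx, rfl⟩ := Finset.mem_image.1 hy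
    obtain ⟨hx0, hxp, hxi⟩ := hs x hx
    exact Finset.mem_image.2
      ⟨_, mul_ediv_mem_Ico hA hx0 hxp, (mul_emod_emod_eq_of_modEq hxi).symm⟩
  calc ((s.image fun x => A * x % p % n).card : ℤ)
      ≤ (Finset.Ico 0 A).card := by
        exact_mod_cast (Finset.card_le_card hsub).trans Finset.card_image_le
    _ = A := by rw [Int.card_Ico]; omega

lemma exists_notMem_of_card_lt {s : Finset ℤ} {n : ℤ} (hs : ∀ y ∈ s, 0 ≤ y ∧ y < n)
    (hcard : (s.card : ℤ) < n) : ∃ j, 0 ≤ j ∧ j < n ∧ j ∉ s := by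
  have hsub : s ⊆ Finset.Ico 0 n := fun y hy => Finset.mem_Ico.2 (hs y hy)
  have hlt : s.card < (Finset.Ico 0 n).card := by
    rw [Int.card_Ico]
    omega
  obtain ⟨j, hj, hjs⟩ := Finset.exists_mem_notMem_of_card_lt_card hlt
  exact ⟨j, (Finset.mem_Ico.1 hj).1, (Finset.mem_Ico.1 hj).2, hjs⟩

end Int

theorem stmt_1_general (p A n i : ℤ) (hA : 0 < A) (hAn : A < n) :
    ((((Finset.Icc 1 (p - 1)).filter (fun x => x % n = i)).image
        (fun x => ((A * x) % p) % n)).card : ℤ) ≤ A ∧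
    ∃ j : ℤ, 0 ≤ j ∧ j < n ∧
      ∀ x : ℤ, 1 ≤ x → x ≤ p - 1 → x % n = i → ((A * x) % p) % n ≠ j := by
  set s := (Finset.Icc 1 (p - 1)).filter (fun x => x % n = i)
  have hs : ∀ x ∈ s, 0 ≤ x ∧ x < p ∧ x ≡ i [ZMOD n] := by
    intro x hx
    obtain ⟨hx, hxi⟩ := Finset.mem_filter.1 hx
    obtain ⟨hx1, hxp⟩ := Finset.mem_Icc.1 hx
    exact ⟨by omega, by omega, hxi ▸ (Int.mod_modEq x n).symm⟩
  have hcard := Int.card_image_mul_emod_emod_le hA s hs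
  have hrange : ∀ y ∈ s.image (fun x => A * x % p % n), 0 ≤ y ∧ y < n := by
    intro y hy
    obtain ⟨x, -, rfl⟩ := Finset.mem_image.1 hy
    exact ⟨Int.emod_nonneg _ (by omega), Int.emod_lt_of_pos _ (by omega)⟩
  obtain ⟨j, hj0, hjn, hjs⟩ := Int.exists_notMem_of_card_lt hrange (by omega)
  refine ⟨hcard, j, hj0, hjn, fun x hx1 hxp hxi hxj => hjs ?_⟩
  exact Finset.mem_image.2
    ⟨x, Finset.mem_filter.2 ⟨Finset.mem_Icc.2 ⟨hx1, hxp⟩, hxi⟩, hxj⟩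

theorem stmt_1 (p A n i : ℤ) (hp : Prime p) (hodd : Odd p) (hn : 2 ≤ n)
    (hpn : n < p) (hA : 0 < A) (hAn : A < n) (hi : 0 ≤ i) (hin : i < n) :
    ((((Finset.Icc 1 (p - 1)).filter (fun x => x % n = i)).image
        (fun x => ((A * x) % p) % n)).card : ℤ) ≤ A ∧
    ∃ j : ℤ, 0 ≤ j ∧ j < n ∧
      ∀ x : ℤ, 1 ≤ x → x ≤ p - 1 → x % n = i → ((A * x) % p) % n ≠ j :=
  stmt_1_general p A n i hA hAn
end

section
/- Let p be an odd prime and C an integer with |C| < p/2 and p ∤ C. For any integer n with 2 ≤ n and n² < p, there exist integers r, s with 1 ≤ s ≤ n, |r| < p/n, gcd(r,s) = 1, (r,s) ≠ (0,0), and r ≡ C·s (mod p). -/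
/-! Dirichlet's approximation theorem applied to `C / p` gives `0 < s ≤ n` and `j` with
`|s C - j p| ≤ p / (n + 1)`, i.e. a small `r ≡ C s (mod p)`. Dividing `r` and `s` by their gcd
`g` keeps the congruence, because `0 < g ≤ s ≤ n < p` and `p` is prime. -/

theorem Int.exists_abs_mul_lt_dvd_sub_mul (p C : ℤ) {n : ℕ} (hp : 0 < p) (hn : 0 < n) :
    ∃ r s : ℤ, 0 < s ∧ s ≤ n ∧ |r| * n < p ∧ p ∣ r - C * s := by
  obtain ⟨j, s, hs, hsn, happrox⟩ := Real.exists_int_int_abs_mul_sub_le ((C : ℝ) / p) hn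
  refine ⟨C * s - j * p, s, hs, hsn, ?_, ⟨-j, by ring⟩⟩
  have hp' : (0 : ℝ) < p := by exact_mod_cast hp
  have hn' : (0 : ℝ) < n := by exact_mod_cast hn
  have hr : ((|C * s - j * p| : ℤ) : ℝ) = p * |s * ((C : ℝ) / p) - j| := by
    rw [← abs_of_pos hp', ← abs_mul, abs_of_pos hp']
    push_cast
    congr 1
    field_simp
  suffices ((|C * s - j * p| : ℤ) : ℝ) * n < p by exact_mod_cast this
  calc ((|C * s - j * p| : ℤ) : ℝ) * n ≤ p * (1 / (n + 1)) * n := by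
        rw [hr]; gcongr
    _ < p := by
        rw [mul_one_div, div_mul_eq_mul_div, div_lt_iff₀ (by positivity)]
        linarith

theorem Int.exists_coprime_dvd_sub_mul_of_lt {p C r s : ℤ} (hp : Prime p) (hs : 0 < s)
    (hsp : s < p) (h : p ∣ r - C * s) :
    ∃ r' s' : ℤ, 0 < s' ∧ s' ≤ s ∧ |r'| ≤ |r| ∧ Int.gcd r' s' = 1 ∧ p ∣ r' - C * s' := by
  obtain ⟨g, r', s', hg, hgcd, rfl, rfl⟩ :=
    Int.exists_gcd_one' (Int.gcd_pos_of_ne_zero_right r hs.ne')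
  have hg1 : (1 : ℤ) ≤ g := by exact_mod_cast hg
  have hs' : 0 < s' := pos_of_mul_pos_left hs (by positivity)
  have hpg : ¬ p ∣ g := fun hd => by
    have := Int.le_of_dvd (by positivity) hd
    nlinarith
  refine ⟨r', s', hs', le_mul_of_one_le_right hs'.le hg1, ?_, hgcd, ?_⟩
  · rw [abs_mul, Nat.abs_cast]
    exact le_mul_of_one_le_right (abs_nonneg _) hg1
  · have hprod : p ∣ (r' - C * s') * g := by convert h using 1; ring
    exact (hp.dvd_or_dvd hprod).resolve_right hpg

theorem stmt_2_general (p C n : ℤ) (hp : Prime p)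
    (hn : 2 ≤ n) (hnp : n ^ 2 < p) :
    ∃ r s : ℤ, 1 ≤ s ∧ s ≤ n ∧ |r| * n < p ∧ Int.gcd r s = 1 ∧
      (r, s) ≠ (0, 0) ∧ p ∣ (r - C * s) := by
  lift n to ℕ using (by omega)
  obtain ⟨r, s, hs, hsn, hr, hdvd⟩ :=
    Int.exists_abs_mul_lt_dvd_sub_mul p C (n := n) (by nlinarith) (by omega)
  obtain ⟨r', s', hs', hs's, hr'r, hgcd, hdvd'⟩ :=
    Int.exists_coprime_dvd_sub_mul_of_lt hp hs (by nlinarith) hdvd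
  refine ⟨r', s', hs', hs's.trans hsn, ?_, hgcd, ?_, hdvd'⟩
  · calc |r'| * n ≤ |r| * n := by gcongr
      _ < p := hr
  · rintro ⟨-, rfl⟩
    exact hs'.ne' rfl

theorem stmt_2 (p C n : ℤ) (hp : Prime p) (hodd : Odd p)
    (hC : 2 * |C| < p) (hpC : ¬ p ∣ C) (hn : 2 ≤ n) (hnp : n ^ 2 < p) :
    ∃ r s : ℤ, 1 ≤ s ∧ s ≤ n ∧ |r| * n < p ∧ Int.gcd r s = 1 ∧
      (r, s) ≠ (0, 0) ∧ p ∣ (r - C * s) :=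
  stmt_2_general p C n hp hn hnp
end

section
/- Let p be an odd prime, n ≥ 2, and suppose r, s, t are integers with s > 0, gcd(r,s) = 1, |r| + s > n, s·A = t·p - r for an integer A with |A| < p/2 and p ∤ A, and p > |r|·s·n. Then for every pair i, j with 0 ≤ i, j < n, there exists x with 1 ≤ x ≤ p-1, x ≡ i (mod n), and the least positive residue of A·x mod p is congruent to j (mod n). -/
/-!
Since `s * A ≡ -r (mod p)` and `p ∤ s`, the residue `y = A * x mod p` is characterised by
`p ∣ r * x + s * y`; for `r < 0` the reflection `y ↦ p - y` reduces to `r > 0`. So it suffices to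
find a lattice point of `r * x + s * y ≡ 0 (mod p)` in the square `(0, p)²` with `x ≡ i`,
`y ≡ j (mod n)`. Pick `k ∈ [1, n]` with `k * p ≡ r * i + s * j (mod n)`. The integer points of the
line `r * x + s * y = k * p` are `(x₀ + m * s, y₀ - m * r)`, and the congruences on `x, y` amount to
one congruence on `m` mod `n`. As `1 ≤ k < r + s`, the chord of the square on this line has
parameter length `min(r, s, k, r + s - k) * p / (r * s) ≥ p / (r * s) > n`, so it contains every
residue class of `m`.
-/

theorem Int.exists_modEq_cast_mem_Ioo {K : Type*} [Ring K] [LinearOrder K] [IsStrictOrderedRing K]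
    [Archimedean K] {n : ℤ} (hn : 0 < n) (a : ℤ) {lo hi : K} (h : lo + n < hi) :
    ∃ m : ℤ, m ≡ a [ZMOD n] ∧ lo < m ∧ (m : K) < hi := by
  have hn' : (0 : K) < n := by exact_mod_cast hn
  obtain ⟨hlo, hle⟩ := toIocMod_mem_Ioc hn' lo (a : K)
  rw [toIocMod, zsmul_eq_mul] at hlo hle
  refine ⟨a - toIocDiv hn' lo a * n, Int.modEq_iff_dvd.2 ⟨toIocDiv hn' lo a, by ring⟩, ?_, ?_⟩
  · exact_mod_cast hlo
  · exact_mod_cast hle.trans_lt h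

theorem Int.exists_mul_modEq_mem_Icc {p n : ℤ} (hpn : IsCoprime p n) (hn : 0 < n) (c : ℤ) :
    ∃ k, 1 ≤ k ∧ k ≤ n ∧ k * p ≡ c [ZMOD n] := by
  obtain ⟨w, z, hwz⟩ := hpn
  obtain ⟨k, hk, hk0, hkn⟩ :=
    Int.exists_modEq_cast_mem_Ioo hn (c * w) (lt_add_one (0 + n))
  simp only [Int.cast_id, zero_add] at hk0 hkn
  refine ⟨k, hk0, Int.lt_add_one_iff.1 hkn, ?_⟩
  calc k * p ≡ c * w * p [ZMOD n] := hk.mul_right p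
    _ = c + n * (-c * z) := by linear_combination c * hwz
    _ ≡ c [ZMOD n] := by simp [Int.ModEq]

theorem modEq_line_param_of_bezout {n r s u v x₀ y₀ i j m : ℤ} (huv : u * r + v * s = 1)
    (hline : r * x₀ + s * y₀ ≡ r * i + s * j [ZMOD n])
    (hm : m ≡ u * (y₀ - j) + v * (i - x₀) [ZMOD n]) :
    x₀ + m * s ≡ i [ZMOD n] ∧ y₀ - m * r ≡ j [ZMOD n] := by
  rw [Int.modEq_iff_dvd] at hline hm ⊢
  rw [Int.modEq_iff_dvd]
  set D := r * i + s * j - (r * x₀ + s * y₀)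
  set M := u * (y₀ - j) + v * (i - x₀) - m
  constructor
  · rw [show i - (x₀ + m * s) = u * D + s * M by linear_combination (x₀ - i) * huv]
    exact dvd_add (hline.mul_left u) (hm.mul_left s)
  · rw [show j - (y₀ - m * r) = v * D - r * M by linear_combination (y₀ - j) * huv]
    exact dvd_sub (hline.mul_left v) (hm.mul_left r)

theorem exists_modEq_mem_square_on_line {p n r s x₀ y₀ : ℤ} (hn : 0 < n) (hr : 0 < r)
    (hs : 0 < s) (hsn : s * n < p) (hrn : r * n < p) (hlow : r * s * n < r * x₀ + s * y₀)
    (hhigh : r * x₀ + s * y₀ + r * s * n < (r + s) * p) (a : ℤ) :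
    ∃ m, m ≡ a [ZMOD n] ∧ 0 < x₀ + m * s ∧ x₀ + m * s < p ∧ 0 < y₀ - m * r ∧ y₀ - m * r < p := by
  have hr' : (0 : ℚ) < r := by exact_mod_cast hr
  have hs' : (0 : ℚ) < s := by exact_mod_cast hs
  have hlong : max (-x₀ / s : ℚ) ((y₀ - p) / r) + n < min ((p - x₀ : ℚ) / s) (y₀ / r) := by
    rw [← max_add_add_right, max_lt_iff, lt_min_iff, lt_min_iff]
    refine ⟨⟨?_, ?_⟩, ?_, ?_⟩ <;>
      rw [div_add' _ _ _ (by positivity), div_lt_div_iff₀ (by positivity) (by positivity)]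
    all_goals norm_cast; nlinarith
  obtain ⟨m, hm, hlo, hhi⟩ := Int.exists_modEq_cast_mem_Ioo hn a hlong
  rw [max_lt_iff, div_lt_iff₀ hs', div_lt_iff₀ hr'] at hlo
  rw [lt_min_iff, lt_div_iff₀ hs', lt_div_iff₀ hr'] at hhi
  obtain ⟨hx₀, hy₀⟩ := hlo
  obtain ⟨hxp, hyp⟩ := hhi
  norm_cast at hx₀ hy₀ hxp hyp
  exact ⟨m, hm, by linarith, by linarith, by linarith, by linarith⟩

theorem exists_mem_square_dvd_modEq {p n r s : ℤ} (hn : 0 < n) (hr : 0 < r) (hs : 0 < s)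
    (hrs : IsCoprime r s) (hpn : IsCoprime p n) (hbig : n < r + s) (hplarge : r * s * n < p)
    (i j : ℤ) : ∃ x y, 0 < x ∧ x < p ∧ 0 < y ∧ y < p ∧ p ∣ r * x + s * y ∧
      x ≡ i [ZMOD n] ∧ y ≡ j [ZMOD n] := by
  obtain ⟨u, v, huv⟩ := hrs
  obtain ⟨k, hk1, hkn, hk⟩ := Int.exists_mul_modEq_mem_Icc hpn hn (r * i + s * j)
  have hline : r * (k * p * u) + s * (k * p * v) = k * p := by
    linear_combination k * p * huv
  have hp : 0 < p := by nlinarith [mul_pos (mul_pos hr hs) hn]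
  obtain ⟨m, hm, hx0, hxp, hy0, hyp⟩ := exists_modEq_mem_square_on_line (p := p) hn hr hs
    (by nlinarith [mul_pos hs hn]) (by nlinarith [mul_pos hr hn])
    (by rw [hline]; nlinarith) (by rw [hline]; nlinarith)
    (u * (k * p * v - j) + v * (i - k * p * u))
  obtain ⟨hxi, hyj⟩ := modEq_line_param_of_bezout huv (by rwa [hline]) hm
  refine ⟨_, _, hx0, hxp, hy0, hyp, ⟨k, by linear_combination hline⟩, hxi, hyj⟩

theorem mul_emod_eq_of_dvd_add {p s t r A x y : ℤ} (hp : Prime p) (hps : ¬ p ∣ s)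
    (hA : s * A = t * p - r) (hy : 0 ≤ y) (hyp : y < p) (h : p ∣ r * x + s * y) :
    A * x % p = y := by
  have hsy : p ∣ s * (y - A * x) := by
    rw [show s * (y - A * x) = r * x + s * y - p * (t * x) by linear_combination (-x) * hA]
    exact dvd_sub h (dvd_mul_right p (t * x))
  have hy' : A * x ≡ y [ZMOD p] :=
    Int.modEq_iff_dvd.2 ((hp.dvd_or_dvd hsy).resolve_left hps)
  exact Eq.trans hy' (Int.emod_eq_of_lt hy hyp)

theorem stmt_3_general (p n r s t A : ℤ) (hp : Prime p)
    (hs : 0 < s) (hrs : Int.gcd r s = 1) (hbig : n < |r| + s)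
    (hA : s * A = t * p - r)
    (hplarge : |r| * s * n < p) :
    ∀ i j : ℤ, 0 ≤ i → i < n → 0 ≤ j → j < n →
      ∃ x : ℤ, 1 ≤ x ∧ x ≤ p - 1 ∧ x % n = i ∧ ((A * x) % p) % n = j := by
  intro i j hi0 hi1 hj0 hj1
  have hn : 0 < n := by omega
  have hr : r ≠ 0 := by
    rintro rfl
    rw [Int.gcd_zero_left] at hrs
    rw [abs_zero] at hbig
    omega
  have hr' : 0 < |r| := abs_pos.2 hr
  have hsp : s < p := by nlinarith [mul_pos hr' hn]
  have hnp : n < p := by nlinarith [mul_pos hr' hs]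
  have hps : ¬ p ∣ s := fun h => (Int.le_of_dvd hs h).not_gt hsp
  have hpn : IsCoprime p n :=
    (Prime.coprime_iff_not_dvd hp).2 fun h => (Int.le_of_dvd hn h).not_gt hnp
  have hcop : IsCoprime |r| s := (Int.isCoprime_iff_gcd_eq_one.2 hrs).abs_left
  rcases hr.lt_or_gt with hneg | hpos
  · rw [abs_of_neg hneg] at hr' hcop hbig hplarge
    obtain ⟨x, y, hx0, hxp, hy0, hyp, hdvd, hxi, hyj⟩ :=
      exists_mem_square_dvd_modEq hn hr' hs hcop hpn hbig hplarge i (p - j)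
    have hAx : A * x % p = p - y := mul_emod_eq_of_dvd_add hp hps hA (by omega) (by omega)
      (by rw [show r * x + s * (p - y) = s * p - (-r * x + s * y) by ring]
          exact dvd_sub (dvd_mul_left p s) hdvd)
    refine ⟨x, hx0, by omega, Eq.trans hxi (Int.emod_eq_of_lt hi0 hi1), ?_⟩
    have hyj' : p - y ≡ j [ZMOD n] := by simpa using hyj.sub_left p
    rw [hAx]
    exact Eq.trans hyj' (Int.emod_eq_of_lt hj0 hj1)
  · rw [abs_of_pos hpos] at hr' hcop hbig hplarge
    obtain ⟨x, y, hx0, hxp, hy0, hyp, hdvd, hxi, hyj⟩ :=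
      exists_mem_square_dvd_modEq hn hr' hs hcop hpn hbig hplarge i j
    refine ⟨x, hx0, by omega, Eq.trans hxi (Int.emod_eq_of_lt hi0 hi1), ?_⟩
    rw [mul_emod_eq_of_dvd_add hp hps hA hy0.le hyp hdvd]
    exact Eq.trans hyj (Int.emod_eq_of_lt hj0 hj1)

theorem stmt_3 (p n r s t A : ℤ) (hp : Prime p) (hodd : Odd p) (hn : 2 ≤ n)
    (hs : 0 < s) (hrs : Int.gcd r s = 1) (hbig : n < |r| + s)
    (hA : s * A = t * p - r) (hAsize : 2 * |A| < p) (hpA : ¬ p ∣ A)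
    (hplarge : |r| * s * n < p) :
    ∀ i j : ℤ, 0 ≤ i → i < n → 0 ≤ j → j < n →
      ∃ x : ℤ, 1 ≤ x ∧ x ≤ p - 1 ∧ x % n = i ∧ ((A * x) % p) % n = j :=
  stmt_3_general p n r s t A hp hs hrs hbig hA hplarge
end

section
/- Let p be an odd prime and n, A integers with n ≥ 2, 0 < A < n, and A = (t·p - r)/s with r, s, t integers, s > 0, gcd(r,s)=1, and suppose |r| + s ≤ n and p > n. Then f(x) = A·x mod p is a Type (iv) map: there exist i, j with 0 ≤ i, j < n such that f(I_i) ∩ I_j = ∅, i.e., no x ≡ i (mod n) with 1 ≤ x ≤ p-1 has (A·x mod p) ≡ j (mod n). -/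
/-!
Write `y = A x mod p`. From `s A = t p - r` we get `s y + r x = m p` for an integer `m`, and the
ranges `1 ≤ x ≤ p - 1`, `0 ≤ y ≤ p - 1` confine `m` to the open interval between `min r 0` and
`max r 0 + s` (`r ≠ 0`, since otherwise `p ∣ A`). That interval holds `|r| + s - 1 < n` integers, so
some residue `c` mod `n` is not of the form `m p mod n`. With `r u + s v = 1`, the classes
`x ≡ c u` and `y ≡ c v` would force `m p ≡ s y + r x ≡ c (mod n)`; hence `I_{cu}` misses `I_{cv}`.
-/

theorem exists_nonneg_lt_forall_ne_of_card_lt {n : ℤ} (f : ℤ → ℤ) {M : Finset ℤ}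
    (hM : M.card < n) :
    ∃ c, 0 ≤ c ∧ c < n ∧ ∀ m ∈ M, f m ≠ c := by
  have hcard : (M.image f).card < (Finset.Ico 0 n).card := by
    rw [Int.card_Ico]
    have := M.card_image_le (f := f)
    omega
  obtain ⟨c, hc, hcf⟩ := Finset.exists_mem_notMem_of_card_lt_card hcard
  rw [Finset.mem_Ico] at hc
  exact ⟨c, hc.1, hc.2, fun m hm hmc => hcf (Finset.mem_image.mpr ⟨m, hm, hmc⟩)⟩

theorem card_Ioo_min_max_lt {r s n : ℤ} (hs : 0 < s) (hsmall : |r| + s ≤ n) :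
    (Finset.Ioo (min r 0) (max r 0 + s)).card < n := by
  have hwidth : max r 0 - min r 0 = |r| := by simpa using max_sub_min_eq_abs r 0
  rw [Int.card_Ioo]
  omega

theorem ne_zero_of_mul_eq_mul_sub {p A r s t : ℤ} (hA : 0 < A) (hAp : A < p)
    (hrs : Int.gcd r s = 1) (hdef : s * A = t * p - r) : r ≠ 0 := by
  rintro rfl
  have hs : IsUnit s := Int.isUnit_iff_natAbs_eq.mpr (by simpa [Int.gcd] using hrs)
  have hpA : p ∣ A := (hs.dvd_mul_left).mp ⟨t, by rw [hdef]; ring⟩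
  exact absurd (Int.le_of_dvd hA hpA) (not_le.mpr hAp)

theorem mul_emod_add_mul_eq {p A r s t : ℤ} (hdef : s * A = t * p - r) (x : ℤ) :
    s * (A * x % p) + r * x = (t * x - s * (A * x / p)) * p := by
  linear_combination s * Int.emod_add_mul_ediv (A * x) p + x * hdef

theorem mem_Ioo_min_max_of_mul_eq {p r s x y m : ℤ} (hs : 0 < s) (hr : r ≠ 0)
    (hx1 : 1 ≤ x) (hxp : x ≤ p - 1) (hy0 : 0 ≤ y) (hyp : y ≤ p - 1)
    (hm : s * y + r * x = m * p) :
    m ∈ Finset.Ioo (min r 0) (max r 0 + s) := by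
  have hp : 0 < p := by omega
  rw [Finset.mem_Ioo]
  rcases hr.lt_or_gt with hneg | hpos
  · rw [min_eq_left hneg.le, max_eq_right hneg.le, zero_add]
    constructor <;> exact lt_of_mul_lt_mul_right (a := p) (by nlinarith) hp.le
  · rw [min_eq_right hpos.le, max_eq_left hpos.le]
    constructor <;> exact lt_of_mul_lt_mul_right (a := p) (by nlinarith) hp.le

theorem stmt_6_general (p n A r s t : ℤ)
    (hA : 0 < A) (hAn : A < n)
    (hs : 0 < s) (hrs : Int.gcd r s = 1) (hdef : s * A = t * p - r)
    (hsmall : |r| + s ≤ n) (hpn : n < p) :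
    ∃ i j : ℤ, 0 ≤ i ∧ i < n ∧ 0 ≤ j ∧ j < n ∧
      ∀ x : ℤ, 1 ≤ x → x ≤ p - 1 → x % n = i → ((A * x) % p) % n ≠ j := by
  have hp0 : 0 < p := by omega
  have hn0 : 0 < n := by have := abs_nonneg r; omega
  have hr : r ≠ 0 := ne_zero_of_mul_eq_mul_sub hA (hAn.trans hpn) hrs hdef
  obtain ⟨c, hc0, hcn, hc⟩ :=
    exists_nonneg_lt_forall_ne_of_card_lt (fun m => m * p % n) (card_Ioo_min_max_lt hs hsmall)
  have hbez : r * r.gcdA s + s * r.gcdB s = 1 := by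
    simpa [hrs] using (Int.gcd_eq_gcd_ab r s).symm
  refine ⟨c * r.gcdA s % n, c * r.gcdB s % n, Int.emod_nonneg _ hn0.ne', Int.emod_lt_of_pos _ hn0,
    Int.emod_nonneg _ hn0.ne', Int.emod_lt_of_pos _ hn0, fun x hx1 hxp hxi hyj => ?_⟩
  have hm := mul_emod_add_mul_eq hdef x
  refine hc _ (mem_Ioo_min_max_of_mul_eq hs hr hx1 hxp (Int.emod_nonneg _ hp0.ne')
    (by have := Int.emod_lt_of_pos (A * x) hp0; omega) hm) ?_
  have hcong : s * (A * x % p) + r * x ≡ s * (c * r.gcdB s) + r * (c * r.gcdA s) [ZMOD n] :=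
    ((show _ ≡ _ [ZMOD n] from hyj).mul_left s).add ((show _ ≡ _ [ZMOD n] from hxi).mul_left r)
  have hc' : s * (c * r.gcdB s) + r * (c * r.gcdA s) = c := by linear_combination c * hbez
  rw [← hm, hcong, hc', Int.emod_eq_of_lt hc0 hcn]

theorem stmt_6 (p n A r s t : ℤ) (hp : Prime p) (hodd : Odd p) (hn : 2 ≤ n)
    (hA : 0 < A) (hAn : A < n)
    (hs : 0 < s) (hrs : Int.gcd r s = 1) (hdef : s * A = t * p - r)
    (hsmall : |r| + s ≤ n) (hpn : n < p) :
    ∃ i j : ℤ, 0 ≤ i ∧ i < n ∧ 0 ≤ j ∧ j < n ∧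
      ∀ x : ℤ, 1 ≤ x → x ≤ p - 1 → x % n = i → ((A * x) % p) % n ≠ j :=
  stmt_6_general p n A r s t hA hAn hs hrs hdef hsmall hpn
end

section
/- Let p be an odd prime, n ≥ 2 an integer, and C an integer with n ≤ C ≤ p/n. Fix i, j with 0 ≤ i, j < n. Then the number of x with 1 ≤ x ≤ p-1, x ≡ i (mod n), and the least positive residue of C·x mod p congruent to j (mod n), is greater than p/(4n²). -/
/-!
Split `0 < C * x < C * p` into the blocks `u * p < C * x < (u + 1) * p`, `0 ≤ u < C`. Inside
block `u` the residue `C * x % p` is `C * x - u * p`, so for `x ≡ i (mod n)` the second condition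
reads `u * p ≡ C * i - j (mod n)`; as `p` is invertible mod `n` this singles out one class
`u ≡ t (mod n)`, met by at least `C / n` blocks. In each block the values `C * x` with
`x ≡ i (mod n)` are spaced `n * C` apart, so there are at least `p / (n * C)` of them. Finally
`a + 1 ≤ 2 * d * (a / d)` for `d ≤ a` bounds the product of the two floors below by
`p / (4 n²)`.
-/

namespace Int

theorem add_one_le_two_mul_mul_ediv {a d : ℤ} (hd : 0 < d) (hda : d ≤ a) :
    a + 1 ≤ 2 * d * (a / d) := by
  have hq : 1 ≤ a / d := (Int.le_ediv_iff_mul_le hd).2 (by linarith)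
  have hlt : a < d * (a / d) + d := lt_mul_ediv_self_add hd
  nlinarith

theorem mul_ediv_lt_of_not_dvd {a d : ℤ} (hd : d ≠ 0) (h : ¬d ∣ a) : d * (a / d) < a :=
  lt_of_le_of_ne (mul_ediv_self_le hd) fun he => h ⟨a / d, he.symm⟩

theorem not_mul_dvd_of_prime {p a b : ℤ} (hp : Prime p) (ha : 2 ≤ a) (hb : 2 ≤ b) :
    ¬a * b ∣ p := by
  rintro ⟨c, rfl⟩
  have not_unit : ∀ x : ℤ, 2 ≤ x → ¬IsUnit x := fun x hx hu => by
    rcases isUnit_iff.1 hu with rfl | rfl <;> omega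
  rcases hp.irreducible.isUnit_or_isUnit (mul_assoc a b c) with h | h
  · exact not_unit a ha h
  · exact not_unit b hb (isUnit_of_mul_isUnit_left h)

theorem exists_mul_modEq_of_isCoprime {p n : ℤ} (h : IsCoprime p n) (hn : 0 < n) (c : ℤ) :
    ∃ t, 0 ≤ t ∧ t < n ∧ t * p ≡ c [ZMOD n] := by
  obtain ⟨a, b, hab⟩ := h
  refine ⟨a * c % n, emod_nonneg _ hn.ne', emod_lt_of_pos _ hn, ?_⟩
  calc a * c % n * p ≡ a * c * p [ZMOD n] := (mod_modEq _ n).mul_right p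
    _ = c + n * -(b * c) := by linear_combination c * hab
    _ ≡ c [ZMOD n] := modEq_add_fac_self

end Int

theorem lt_four_mul_sq_mul_ediv_mul_ediv {p n C : ℤ} (hn : 0 < n) (hC : n ≤ C)
    (hp : n * C ≤ p) :
    p < 4 * n ^ 2 * (C / n * (p / (n * C))) := by
  have hC0 : 0 < C := hn.trans_le hC
  have hA := Int.add_one_le_two_mul_mul_ediv hn hC
  have hB := Int.add_one_le_two_mul_mul_ediv (mul_pos hn hC0) hp
  have hp0 : 0 < p := by nlinarith
  refine lt_of_mul_lt_mul_left ?_ hC0.le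
  calc C * p < (C + 1) * (p + 1) := by nlinarith
    _ ≤ 2 * n * (C / n) * (2 * (n * C) * (p / (n * C))) := mul_le_mul hA hB (by omega) (by omega)
    _ = C * (4 * n ^ 2 * (C / n * (p / (n * C)))) := by ring

noncomputable def residueSet (p n C i j : ℤ) : Finset ℤ :=
  (Finset.Icc 1 (p - 1)).filter fun x => x % n = i ∧ C * x % p % n = j

/-- The `k`-th integer `x ≡ i (mod n)` with `C * x > u * p`, counting from `k = 0`. -/
def blockPoint (p n C i u k : ℤ) : ℤ :=
  i + n * ((u * p - C * i) / (n * C) + 1 + k)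

section

variable {p n C i j u k : ℤ}

theorem mem_residueSet_of_mem_block (hC : 0 < C) (hj : 0 ≤ j) (hjn : j < n) {x : ℤ}
    (hu : 0 ≤ u) (huC : u < C) (hup : u * p ≡ C * i - j [ZMOD n]) (hx : x % n = i)
    (hlo : u * p < C * x) (hhi : C * x < u * p + p) : x ∈ residueSet p n C i j := by
  have hp : 0 < p := by linarith
  have hx1 : 0 < x := pos_of_mul_pos_right (by nlinarith) hC.le
  have hxp : x < p := lt_of_mul_lt_mul_left (by nlinarith) hC.le
  have hdiv : C * x / p = u := (Int.ediv_eq_iff_of_pos hp).2 ⟨hlo.le, hhi⟩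
  have hxi : x ≡ i [ZMOD n] := hx ▸ (Int.emod_emod x n).symm
  have hres : C * x % p ≡ j [ZMOD n] := by
    calc C * x % p = C * x - u * p := by rw [Int.emod_def, hdiv, mul_comm p u]
      _ ≡ C * i - (C * i - j) [ZMOD n] := (hxi.mul_left C).sub hup
      _ = j := by ring
  refine Finset.mem_filter.2 ⟨Finset.mem_Icc.2 ⟨by omega, by omega⟩, hx, ?_⟩
  rw [hres, Int.emod_eq_of_lt hj hjn]

theorem blockPoint_emod (hi : 0 ≤ i) (hin : i < n) : blockPoint p n C i u k % n = i := by
  rw [blockPoint, Int.add_mul_emod_self_left, Int.emod_eq_of_lt hi hin]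

theorem mul_blockPoint_mem_block (hnC : 0 < n * C) (hk : 0 ≤ k) (hkp : n * C * (k + 1) < p) :
    u * p < C * blockPoint p n C i u k ∧ C * blockPoint p n C i u k < u * p + p := by
  have hle := Int.mul_ediv_self_le (x := u * p - C * i) hnC.ne'
  have hlt := Int.lt_mul_ediv_self_add (x := u * p - C * i) hnC
  have hk' : 0 ≤ n * C * k := mul_nonneg hnC.le hk
  constructor <;> · simp only [blockPoint]; linarith

theorem eq_of_blockPoint_eq {u' k' : ℤ} (hnC : 0 < n * C) (hk : 0 ≤ k)
    (hkp : n * C * (k + 1) < p) (hk' : 0 ≤ k') (hkp' : n * C * (k' + 1) < p)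
    (h : blockPoint p n C i u k = blockPoint p n C i u' k') : u = u' ∧ k = k' := by
  have hp : 0 < p := by nlinarith
  have hdiv : ∀ u k, 0 ≤ k → n * C * (k + 1) < p → C * blockPoint p n C i u k / p = u :=
    fun _ _ hk hkp =>
      (Int.ediv_eq_iff_of_pos hp).2 <| (mul_blockPoint_mem_block hnC hk hkp).imp le_of_lt id
  have hu : u = u' := by rw [← hdiv u k hk hkp, ← hdiv u' k' hk' hkp', h]
  subst hu
  refine ⟨rfl, ?_⟩
  have hn : n ≠ 0 := left_ne_zero_of_mul hnC.ne'
  simpa [blockPoint, hn] using h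

theorem blockPoint_mem_residueSet (hi : 0 ≤ i) (hin : i < n) (hj : 0 ≤ j) (hjn : j < n)
    (hnC : 0 < n * C) (hu : 0 ≤ u) (huC : u < C) (hup : u * p ≡ C * i - j [ZMOD n])
    (hk : 0 ≤ k) (hkp : n * C * (k + 1) < p) : blockPoint p n C i u k ∈ residueSet p n C i j :=
  have hC : 0 < C := hu.trans_lt huC
  have hblock := mul_blockPoint_mem_block (i := i) (u := u) hnC hk hkp
  mem_residueSet_of_mem_block hC hj hjn hu huC hup (blockPoint_emod hi hin) hblock.1 hblock.2

theorem ediv_mul_ediv_le_card_residueSet (hp : Prime p) (hn : 2 ≤ n) (hC : n ≤ C)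
    (hCp : C * n ≤ p) (hi : 0 ≤ i) (hin : i < n) (hj : 0 ≤ j) (hjn : j < n) :
    C / n * (p / (n * C)) ≤ (residueSet p n C i j).card := by
  have hn0 : 0 < n := by omega
  have hnC : 0 < n * C := mul_pos hn0 (by omega)
  have hcop : IsCoprime p n :=
    (Prime.coprime_iff_not_dvd hp).2 fun h => by nlinarith [Int.le_of_dvd hn0 h]
  obtain ⟨t, ht0, htn, ht⟩ := Int.exists_mul_modEq_of_isCoprime hcop hn0 (C * i - j)
  have hB : n * C * (p / (n * C)) < p :=
    Int.mul_ediv_lt_of_not_dvd hnC.ne' (Int.not_mul_dvd_of_prime hp hn (by omega))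
  set A := C / n
  set B := p / (n * C)
  have hkp : ∀ k < B, n * C * (k + 1) < p := fun k hk =>
    (mul_le_mul_of_nonneg_left (by omega) hnC.le).trans_lt hB
  have huC : ∀ m < A, t + n * m < C := fun m hm => by
    have : n * (m + 1) ≤ n * A := mul_le_mul_of_nonneg_left (by omega) hn0.le
    nlinarith [Int.mul_ediv_self_le (x := C) hn0.ne']
  have hup : ∀ m, (t + n * m) * p ≡ C * i - j [ZMOD n] := fun m => by
    simpa [add_mul, mul_assoc] using ht.add_right (n * (m * p))
  let f : ℤ × ℤ → ℤ := fun mk => blockPoint p n C i (t + n * mk.1) mk.2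
  set S := Finset.Ico 0 A ×ˢ Finset.Ico 0 B
  have hmaps : Set.MapsTo f S (residueSet p n C i j) := by
    rintro ⟨m, k⟩ hmk
    simp only [S, Finset.coe_product, Set.mem_prod, Finset.coe_Ico, Set.mem_Ico] at hmk
    exact blockPoint_mem_residueSet hi hin hj hjn hnC (by nlinarith) (huC m hmk.1.2) (hup m)
      hmk.2.1 (hkp k hmk.2.2)
  have hinj : Set.InjOn f S := by
    rintro ⟨m, k⟩ hmk ⟨m', k'⟩ hmk' h
    simp only [S, Finset.coe_product, Set.mem_prod, Finset.coe_Ico, Set.mem_Ico] at hmk hmk'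
    obtain ⟨hu, rfl⟩ :=
      eq_of_blockPoint_eq hnC hmk.2.1 (hkp k hmk.2.2) hmk'.2.1 (hkp k' hmk'.2.2) h
    rw [mul_left_cancel₀ hn0.ne' (add_left_cancel hu : n * m = n * m')]
  have hA0 : 0 ≤ A := Int.ediv_nonneg (by omega) hn0.le
  have hB0 : 0 ≤ B := Int.ediv_nonneg (by nlinarith) hnC.le
  calc A * B = (S.card : ℤ) := by
        simp [S, Int.toNat_of_nonneg hA0, Int.toNat_of_nonneg hB0]
    _ ≤ _ := by exact_mod_cast Finset.card_le_card_of_injOn f hmaps hinj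

end

theorem stmt_7_general (p n C i j : ℤ) (hp : Prime p) (hn : 2 ≤ n)
    (hC1 : n ≤ C) (hC2 : C * n ≤ p)
    (hi : 0 ≤ i) (hin : i < n) (hj : 0 ≤ j) (hjn : j < n) :
    p < 4 * n ^ 2 *
      (((Finset.Icc 1 (p - 1)).filter
          (fun x => x % n = i ∧ ((C * x) % p) % n = j)).card : ℤ) :=
  calc p < 4 * n ^ 2 * (C / n * (p / (n * C))) :=
        lt_four_mul_sq_mul_ediv_mul_ediv (by omega) hC1 (by linarith [mul_comm C n])
    _ ≤ 4 * n ^ 2 * (residueSet p n C i j).card := by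
        gcongr
        exact ediv_mul_ediv_le_card_residueSet hp hn hC1 hC2 hi hin hj hjn

theorem stmt_7 (p n C i j : ℤ) (hp : Prime p) (hodd : Odd p) (hn : 2 ≤ n)
    (hC1 : n ≤ C) (hC2 : C * n ≤ p)
    (hi : 0 ≤ i) (hin : i < n) (hj : 0 ≤ j) (hjn : j < n) :
    p < 4 * n ^ 2 *
      (((Finset.Icc 1 (p - 1)).filter
          (fun x => x % n = i ∧ ((C * x) % p) % n = j)).card : ℤ) :=
  stmt_7_general p n C i j hp hn hC1 hC2 hi hin hj hjn
end

section
/- Let p be an odd prime congruent to 1 mod 4, and let A be an integer with 0 < 2A < n ≤ p. Then for every i with 0 ≤ i < n, the set of residues mod n of the least positive residues of A·x^((p+1)/2) mod p, as x ranges over I_i = {x : 1 ≤ x ≤ p-1, x ≡ i mod n}, has cardinality at most 2A; in particular f(I_i) misses at least n - 2A residue classes mod n. -/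
/-!
By Euler's criterion `x ^ ((p + 1) / 2) ≡ ± x (mod p)`, so the least positive residue of
`A x ^ ((p + 1) / 2)` is `± A x - p k`, and the bound `1 ≤ x ≤ p - 1` pins the quotient `k`
to one of `A` values for each sign. Reducing mod `n` with `x ≡ i` leaves only the `2 A`
candidates `(± A i - p k) mod n`.
-/

open Finset

theorem ZMod.pow_succ_div_two_eq_or_eq_neg {p : ℕ} [Fact p.Prime] (a : ZMod p) :
    a ^ ((p + 1) / 2) = a ∨ a ^ ((p + 1) / 2) = -a := by
  have hp := Fact.out (p := p.Prime)
  rcases eq_or_ne a 0 with rfl | ha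
  · exact .inl (zero_pow (by have := hp.two_le; omega))
  rcases hp.eq_two_or_odd' with rfl | hodd
  · exact .inl (pow_one a)
  have hexp : (p + 1) / 2 = p / 2 + 1 := by obtain ⟨k, rfl⟩ := hodd; omega
  rw [hexp, pow_succ]
  rcases ZMod.pow_div_two_eq_neg_one_or_one p ha with h | h <;> simp [h]

theorem Int.mul_pow_succ_div_two_emod {p : ℕ} (hp : p.Prime) (A x : ℤ) :
    A * x ^ ((p + 1) / 2) % p = A * x % p ∨ A * x ^ ((p + 1) / 2) % p = -(A * x) % p := by
  have := Fact.mk hp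
  simp only [← ZMod.intCast_eq_intCast_iff']
  push_cast
  rcases ZMod.pow_succ_div_two_eq_or_eq_neg (x : ZMod p) with h | h <;> simp [h]

theorem Int.ediv_mem_Icc_of_nonneg_of_lt {m p A : ℤ} (hp : 0 < p) (h0 : 0 ≤ m)
    (h1 : m < A * p) : m / p ∈ Icc 0 (A - 1) :=
  mem_Icc.2 ⟨Int.ediv_nonneg h0 hp.le, by linarith [(Int.ediv_lt_iff_lt_mul hp).2 h1]⟩

theorem Int.ediv_mem_Icc_of_neg_of_le {m p A : ℤ} (hp : 0 < p) (h0 : m < 0)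
    (h1 : -A * p ≤ m) : m / p ∈ Icc (-A) (-1) :=
  mem_Icc.2 ⟨(Int.le_ediv_iff_mul_le hp).2 h1,
    by linarith [(Int.ediv_lt_iff_lt_mul hp).2 (show m < 0 * p by simpa using h0)]⟩

theorem Int.sub_mul_emod_of_emod_eq {x i n : ℤ} (hx : x % n = i) (A c : ℤ) :
    (A * i - c) % n = (A * x - c) % n := by
  rw [← hx]
  exact ((Int.mod_modEq x n).mul_left A).sub_right c

theorem mul_pow_succ_div_two_emod_emod_mem {p : ℕ} (hp : p.Prime) {n A i x : ℤ} (hA : 0 < A)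
    (hx : x ∈ Icc 1 ((p : ℤ) - 1)) (hxi : x % n = i) :
    A * x ^ ((p + 1) / 2) % p % n ∈
      (Icc 0 (A - 1)).image (fun k => (A * i - p * k) % n) ∪
        (Icc (-A) (-1)).image (fun k => (-A * i - p * k) % n) := by
  obtain ⟨hx1, hx2⟩ := mem_Icc.1 hx
  have hpos : (0 : ℤ) < p := by exact_mod_cast hp.pos
  have hAx : A ≤ A * x := le_mul_of_one_le_right hA.le hx1
  have hAx' : A * x ≤ A * (p - 1) := mul_le_mul_of_nonneg_left hx2 hA.le
  rw [mem_union, mem_image, mem_image]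
  rcases Int.mul_pow_succ_div_two_emod hp A x with h | h
  · rw [h, Int.emod_def (A * x)]
    refine .inl ⟨A * x / p, Int.ediv_mem_Icc_of_nonneg_of_lt hpos (by linarith) (by linarith), ?_⟩
    exact Int.sub_mul_emod_of_emod_eq hxi A _
  · rw [h, Int.emod_def (-(A * x))]
    refine .inr ⟨-(A * x) / p, Int.ediv_mem_Icc_of_neg_of_le hpos (by linarith) (by linarith), ?_⟩
    rw [neg_mul_eq_neg_mul]
    exact Int.sub_mul_emod_of_emod_eq hxi (-A) _

theorem card_image_Icc_union_image_Icc_le {A : ℤ} (hA : 0 ≤ A) (g h : ℤ → ℤ) :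
    (((Icc 0 (A - 1)).image g ∪ (Icc (-A) (-1)).image h).card : ℤ) ≤ 2 * A := by
  have hg := card_image_le (s := Icc 0 (A - 1)) (f := g)
  have hh := card_image_le (s := Icc (-A) (-1)) (f := h)
  have hu := card_union_le ((Icc 0 (A - 1)).image g) ((Icc (-A) (-1)).image h)
  rw [Int.card_Icc] at hg hh
  omega

theorem sub_card_le_card_filter_Icc_notMem (n : ℤ) (T : Finset ℤ) :
    n - T.card ≤ ((Icc 0 (n - 1)).filter (· ∉ T)).card := by
  have h := card_le_card_sdiff_add_card (s := Icc 0 (n - 1)) (t := T)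
  rw [filter_notMem_eq_sdiff]
  rw [Int.card_Icc] at h
  omega

theorem stmt_8_general (p : ℕ) (n A i : ℤ) (hp : p.Prime)
    (hA : 0 < A) :
    ((((Finset.Icc 1 ((p : ℤ) - 1)).filter (fun x => x % n = i)).image
        (fun x => ((A * x ^ ((p + 1) / 2)) % (p : ℤ)) % n)).card : ℤ) ≤ 2 * A ∧
    (((Finset.Icc 0 (n - 1)).filter (fun j =>
        j ∉ (((Finset.Icc 1 ((p : ℤ) - 1)).filter (fun x => x % n = i)).image
          (fun x => ((A * x ^ ((p + 1) / 2)) % (p : ℤ)) % n)))).card : ℤ)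
      ≥ n - 2 * A := by
  set T := ((Icc 1 ((p : ℤ) - 1)).filter (fun x => x % n = i)).image
    (fun x => ((A * x ^ ((p + 1) / 2)) % (p : ℤ)) % n)
  have hsub : T ⊆ (Icc 0 (A - 1)).image (fun k => (A * i - p * k) % n) ∪
      (Icc (-A) (-1)).image (fun k => (-A * i - p * k) % n) := by
    intro y hy
    obtain ⟨x, hx, rfl⟩ := mem_image.1 hy
    exact mul_pow_succ_div_two_emod_emod_mem hp hA (mem_filter.1 hx).1 (mem_filter.1 hx).2
  have hcard : (T.card : ℤ) ≤ 2 * A :=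
    (Nat.cast_le.2 (card_le_card hsub)).trans (card_image_Icc_union_image_Icc_le hA.le _ _)
  exact ⟨hcard, by linarith [sub_card_le_card_filter_Icc_notMem n T]⟩

theorem stmt_8 (p : ℕ) (n A i : ℤ) (hp : p.Prime) (hp4 : p % 4 = 1)
    (hA : 0 < A) (h2A : 2 * A < n) (hnp : n ≤ (p : ℤ))
    (hi : 0 ≤ i) (hin : i < n) :
    ((((Finset.Icc 1 ((p : ℤ) - 1)).filter (fun x => x % n = i)).image
        (fun x => ((A * x ^ ((p + 1) / 2)) % (p : ℤ)) % n)).card : ℤ) ≤ 2 * A ∧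
    (((Finset.Icc 0 (n - 1)).filter (fun j =>
        j ∉ (((Finset.Icc 1 ((p : ℤ) - 1)).filter (fun x => x % n = i)).image
          (fun x => ((A * x ^ ((p + 1) / 2)) % (p : ℤ)) % n)))).card : ℤ)
      ≥ n - 2 * A :=
  stmt_8_general p n A i hp hA
end

section
/- Let p be an odd prime and n ≥ 2 with p > 2(n+3)²n⁴. Suppose y is a nonzero residue mod p with y ≢ ±1 (mod p), and suppose there are integers r₁,s₁,r₂,s₂,r₃,s₃ with 1 ≤ sᵢ ≤ n, |rᵢ| < (n+3)sᵢ, rᵢ ≠ 0, such that y ≡ r₂·s₂⁻¹·s₁·r₁⁻¹ (mod p) and y ≡ r₁·s₁⁻¹·s₃·r₃⁻¹ (mod p). Then (r₁/s₁)² = (r₂/s₂)·(r₃/s₃) as rational numbers. -/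
/-! Multiplying the two congruences crosswise eliminates `y` and gives
`s₁² r₂ r₃ ≡ r₁² s₂ s₃ (mod p)`. Both sides have absolute value at most `(n + 3)² n⁴`, so their
difference is a multiple of `p` smaller than `p` in absolute value, hence zero. -/

theorem dvd_sq_mul_sub_of_dvd_of_dvd {R : Type*} [CommRing R] {p y r₁ s₁ r₂ s₂ r₃ s₃ : R}
    (h₁ : p ∣ y * s₂ * r₁ - r₂ * s₁) (h₂ : p ∣ y * s₁ * r₃ - r₁ * s₃) :
    p ∣ s₁ ^ 2 * r₂ * r₃ - r₁ ^ 2 * s₂ * s₃ := by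
  have h := dvd_sub (h₂.mul_left (s₂ * r₁)) (h₁.mul_left (s₁ * r₃))
  convert h using 1
  ring

theorem Int.eq_of_dvd_sub_of_abs_le {p a b M : ℤ} (h : p ∣ a - b) (ha : |a| ≤ M) (hb : |b| ≤ M)
    (hM : 2 * M < p) : a = b := by
  refine sub_eq_zero.mp (Int.eq_zero_of_abs_lt_dvd h ?_)
  calc |a - b| ≤ |a| + |b| := abs_sub _ _
    _ < p := by linarith

theorem abs_sq_mul_mul_le {R : Type*} [CommRing R] [LinearOrder R] [IsStrictOrderedRing R]
    {a b c A B : R} (ha : |a| ≤ A) (hb : |b| ≤ B) (hc : |c| ≤ B) :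
    |a ^ 2 * b * c| ≤ A ^ 2 * B * B := by
  rw [abs_mul, abs_mul, abs_pow]
  have hB : 0 ≤ B := (abs_nonneg b).trans hb
  gcongr

theorem div_sq_eq_div_mul_div_of_mul_eq {K : Type*} [Field K] {r₁ s₁ r₂ s₂ r₃ s₃ : K}
    (h₁ : s₁ ≠ 0) (h₂ : s₂ ≠ 0) (h₃ : s₃ ≠ 0) (h : s₁ ^ 2 * r₂ * r₃ = r₁ ^ 2 * s₂ * s₃) :
    (r₁ / s₁) ^ 2 = r₂ / s₂ * (r₃ / s₃) := by
  field_simp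
  linear_combination -h

theorem stmt_14_general (p n y r₁ s₁ r₂ s₂ r₃ s₃ : ℤ)
    (hplarge : 2 * (n + 3) ^ 2 * n ^ 4 < p)
    (hs₁ : 1 ≤ s₁) (hs₁n : s₁ ≤ n) (hs₂ : 1 ≤ s₂) (hs₂n : s₂ ≤ n)
    (hs₃ : 1 ≤ s₃) (hs₃n : s₃ ≤ n)
    (hr₁ : |r₁| < (n + 3) * s₁) (hr₂ : |r₂| < (n + 3) * s₂)
    (hr₃ : |r₃| < (n + 3) * s₃)
    (hcong₁ : p ∣ (y * s₂ * r₁ - r₂ * s₁))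
    (hcong₂ : p ∣ (y * s₁ * r₃ - r₁ * s₃)) :
    ((r₁ : ℚ) / s₁) ^ 2 = ((r₂ : ℚ) / s₂) * ((r₃ : ℚ) / s₃) := by
  have hs_abs {s : ℤ} (hs : 1 ≤ s) (hsn : s ≤ n) : |s| ≤ n := by
    rwa [abs_of_pos (by omega)]
  have hr_abs {r s : ℤ} (hs : 1 ≤ s) (hsn : s ≤ n) (hr : |r| < (n + 3) * s) :
      |r| ≤ (n + 3) * n :=
    hr.le.trans (by nlinarith)
  have hA := abs_sq_mul_mul_le (hs_abs hs₁ hs₁n) (hr_abs hs₂ hs₂n hr₂) (hr_abs hs₃ hs₃n hr₃)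
  have hB := abs_sq_mul_mul_le (hr_abs hs₁ hs₁n hr₁) (hs_abs hs₂ hs₂n) (hs_abs hs₃ hs₃n)
  have heq := Int.eq_of_dvd_sub_of_abs_le (M := (n + 3) ^ 2 * n ^ 4)
    (dvd_sq_mul_sub_of_dvd_of_dvd hcong₁ hcong₂) (hA.trans_eq (by ring)) (hB.trans_eq (by ring))
    (by linarith)
  refine div_sq_eq_div_mul_div_of_mul_eq ?_ ?_ ?_ (by exact_mod_cast heq) <;>
    exact Int.cast_ne_zero.mpr (by omega)

theorem stmt_14 (p n y r₁ s₁ r₂ s₂ r₃ s₃ : ℤ) (hp : Prime p) (hodd : Odd p)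
    (hn : 2 ≤ n) (hplarge : 2 * (n + 3) ^ 2 * n ^ 4 < p)
    (hy : ¬ p ∣ y) (hy1 : ¬ p ∣ (y - 1)) (hy2 : ¬ p ∣ (y + 1))
    (hs₁ : 1 ≤ s₁) (hs₁n : s₁ ≤ n) (hs₂ : 1 ≤ s₂) (hs₂n : s₂ ≤ n)
    (hs₃ : 1 ≤ s₃) (hs₃n : s₃ ≤ n)
    (hr₁ : |r₁| < (n + 3) * s₁) (hr₂ : |r₂| < (n + 3) * s₂)
    (hr₃ : |r₃| < (n + 3) * s₃)
    (hr₁0 : r₁ ≠ 0) (hr₂0 : r₂ ≠ 0) (hr₃0 : r₃ ≠ 0)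
    (hcong₁ : p ∣ (y * s₂ * r₁ - r₂ * s₁))
    (hcong₂ : p ∣ (y * s₁ * r₃ - r₁ * s₃)) :
    ((r₁ : ℚ) / s₁) ^ 2 = ((r₂ : ℚ) / s₂) * ((r₃ : ℚ) / s₃) :=
  stmt_14_general p n y r₁ s₁ r₂ s₂ r₃ s₃ hplarge hs₁ hs₁n hs₂ hs₂n hs₃ hs₃n hr₁ hr₂ hr₃ hcong₁
    hcong₂
end

section
/- Let p be an odd prime, n ≥ 2, r, s, t integers with 0 < r ≤ s, gcd(r,s) = 1, r + s > n, and p > r·s·n. Let A = (t·p - r)/s be an integer with |A| < p/2. Fix i, j with 0 ≤ i, j < n. Then the number of x with 1 ≤ x ≤ p-1, x ≡ i (mod n), and least positive residue of A·x mod p congruent to j (mod n), is at least ⌊p/(r·s·n)⌋. -/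
private lemma emod_eq_of_modEq {n a b : ℤ} (h : a ≡ b [ZMOD n]) (h0 : 0 ≤ b) (h1 : b < n) :
    a % n = b := by
  have h2 : a % n = b % n := h
  rwa [Int.emod_eq_of_lt h0 h1] at h2

private lemma self_modEq (a n : ℤ) : a ≡ a % n [ZMOD n] :=
  (Int.emod_emod_of_dvd a dvd_rfl).symm

private lemma modEq_of_dvd_sub {n a b : ℤ} (h : n ∣ a - b) : a ≡ b [ZMOD n] := by
  refine Int.modEq_iff_dvd.mpr ?_
  rw [← neg_sub a b]
  exact dvd_neg.mpr h

set_option maxHeartbeats 1000000 in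
private lemma key (p n r s t A i j x₁ y₁ u : ℤ) (hp : Prime p) (hn : 2 ≤ n)
    (hs : 0 < s) (hr : 0 < r) (hrle : r ≤ s) (hplarge : r * s * n < p)
    (hA : s * A = t * p - r)
    (hi : 0 ≤ i) (hin : i < n) (hj : 0 ≤ j) (hjn : j < n)
    (hu1 : 1 ≤ u) (hus : u ≤ s)
    (hline : r * x₁ + s * y₁ = u * p)
    (hxi : x₁ ≡ i [ZMOD n]) (hyj : y₁ ≡ j [ZMOD n]) :
    p / (r * s * n) ≤
      (((Finset.Icc 1 (p - 1)).filter
          (fun x => x % n = i ∧ ((A * x) % p) % n = j)).card : ℤ) := by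
  have hn0 : (0:ℤ) < n := by linarith
  have hrsn : (0:ℤ) < r * s * n := by positivity
  have hrsn2 : (2:ℤ) ≤ r * s * n := by
    calc (2:ℤ) = 1 * 1 * 2 := by ring
      _ ≤ r * s * n := by gcongr <;> omega
  have hp0 : (0:ℤ) < p := by linarith
  have hsrsn : s ≤ r * s * n := by
    calc s = 1 * s * 1 := by ring
      _ ≤ r * s * n := by gcongr <;> omega
  have hsp : s < p := by linarith
  have hrp : r < p := by linarith
  have hps : ¬ p ∣ s := fun h => absurd (Int.le_of_dvd hs h) (by linarith)
  set M := p / (r * s * n) with hMdef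
  set ρ := p % (r * s * n) with hρdef
  have hMρ : r * s * n * M + ρ = p := Int.mul_ediv_add_emod p (r*s*n)
  have hρ0 : 0 ≤ ρ := Int.emod_nonneg p (ne_of_gt hrsn)
  have hρp : ρ < r * s * n := Int.emod_lt_of_pos p hrsn
  have hρ1 : 1 ≤ ρ := by
    rcases (by omega : ρ = 0 ∨ 1 ≤ ρ) with h0 | h1
    · exfalso
      have hdvd : (r * s * n) ∣ p := ⟨M, by linarith⟩
      have hpn : p.natAbs.Prime := Int.prime_iff_natAbs_prime.mp hp
      have h2 : (r*s*n).natAbs ∣ p.natAbs := Int.natAbs_dvd_natAbs.mpr hdvd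
      have e1 : (((r*s*n).natAbs : ℤ)) = r*s*n := Int.natAbs_of_nonneg hrsn.le
      have e2 : ((p.natAbs : ℤ)) = p := Int.natAbs_of_nonneg hp0.le
      rcases hpn.eq_one_or_self_of_dvd _ h2 with h3 | h3
      · rw [h3] at e1; push_cast at e1; linarith
      · rw [h3] at e1; rw [e2] at e1; linarith
    · exact h1
  have hM1 : 1 ≤ M := by
    by_contra h
    push_neg at h
    have : r * s * n * M ≤ 0 := mul_nonpos_of_nonneg_of_nonpos hrsn.le (by linarith)
    linarith
  set m := s * n with hmdef
  have hm : (0:ℤ) < m := by positivity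
  set xs := (x₁ - 1) % m + 1 with hxsdef
  set q := (x₁ - 1) / m with hqdef
  have hqm : x₁ - xs = q * m := by
    have h := Int.mul_ediv_add_emod (x₁ - 1) m
    linarith [mul_comm m q, hxsdef, h]
  set ys := y₁ + q * (r * n) with hysdef
  have hlines : r * xs + s * ys = u * p := by
    linear_combination hline - r * hqm + s * hysdef - q * r * hmdef
  have hxs1 : 1 ≤ xs := by
    have := Int.emod_nonneg (x₁ - 1) (ne_of_gt hm)
    omega
  have hxsm : xs ≤ m := by
    have := Int.emod_lt_of_pos (x₁ - 1) hm
    omega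
  have hxsi : xs ≡ i [ZMOD n] := by
    refine (modEq_of_dvd_sub ⟨-(q*s), ?_⟩).trans hxi
    linear_combination -hqm - q * hmdef
  have hysj : ys ≡ j [ZMOD n] := by
    refine (modEq_of_dvd_sub ⟨q*r, ?_⟩).trans hyj
    linear_combination hysdef
  -- main size bound
  have hxsr : r * xs ≤ r * m := by nlinarith
  have hkey : r * xs + (M - 1) * (r * s * n) + s ≤ u * p := by
    have hMm : (M - 1) * (r * s * n) = p - ρ - r * s * n := by linear_combination hMρ
    rcases (by omega : u = 1 ∨ 2 ≤ u) with hu | hu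
    · subst hu
      have hmain : r * xs ≤ r * s * n + ρ - s := by
        by_contra h
        push_neg at h
        have hd1 : s ∣ (1 * p - r * xs) := ⟨ys, by linarith⟩
        have hd2 : s ∣ (p - ρ) := ⟨r * n * M, by linear_combination -hMρ⟩
        have hd3 : s ∣ (r * s * n) := ⟨r * n, by ring⟩
        have hE : s ∣ (r * s * n + ρ - r * xs) := by
          have h4 : r * s * n + ρ - r * xs = (r*s*n) - (p - ρ) + (1 * p - r * xs) := by ring
          rw [h4]
          exact (hd3.sub hd2).add hd1
        have hE1 : 1 ≤ r * s * n + ρ - r * xs := by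
          have : r * xs ≤ r * s * n := by rw [hmdef] at hxsr; nlinarith
          linarith
        have := Int.le_of_dvd (by linarith) hE
        linarith
      linarith
    · have h1 : r * xs ≤ r * s * n := by rw [hmdef] at hxsr; nlinarith
      have h2 : 2 * p ≤ u * p := by nlinarith
      linarith
  -- membership
  set T := (Finset.Icc 1 (p - 1)).filter
      (fun x => x % n = i ∧ ((A * x) % p) % n = j) with hT
  have hmem : ∀ k : ℤ, 0 ≤ k → k ≤ M - 1 → (xs + k * m) ∈ T := by
    intro k hk0 hk1
    set x := xs + k * m with hxdef
    set y := ys - k * (r * n) with hydef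
    have hlinxy : r * x + s * y = u * p := by
      linear_combination hlines + r * k * hmdef
    have hkm : k * m ≤ (M - 1) * m := mul_le_mul_of_nonneg_right hk1 hm.le
    have hkrm : k * (r * m) ≤ (M - 1) * (r * m) :=
      mul_le_mul_of_nonneg_right hk1 (by positivity)
    have hx1 : 1 ≤ x := by nlinarith [mul_nonneg hk0 hm.le]
    have hMm : M * (r * s * n) = p - ρ := by linear_combination hMρ
    have hxb : x ≤ p - 1 := by
      have h5 : x ≤ M * m := by linarith
      have h6 : M * m ≤ M * (r * s * n) := by
        have hmn : m ≤ r * s * n := by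
          rw [hmdef]
          calc s * n = 1 * (s * n) := by ring
            _ ≤ r * (s * n) := by gcongr <;> omega
            _ = r * s * n := by ring
        exact mul_le_mul_of_nonneg_left hmn (by linarith)
      linarith
    have hrx : r * x + s ≤ u * p := by
      have : r * x = r * xs + k * (r * m) := by ring
      rw [hmdef] at hkrm
      nlinarith
    have hy1 : 1 ≤ y := by
      have h7 : s * 1 ≤ s * y := by linarith
      exact le_of_mul_le_mul_left h7 hs
    have hyb : y ≤ p - 1 := by
      have h8 : s * y < s * p := by nlinarith
      have := lt_of_mul_lt_mul_left h8 hs.le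
      omega
    have hxmod : x % n = i := by
      refine emod_eq_of_modEq ((modEq_of_dvd_sub ⟨k * s, ?_⟩).trans hxsi) hi hin
      linear_combination k * hmdef
    have hymod : (A * x) % p = y := by
      have h5 : s * (A * x - y) = p * (t * x - u) := by
        linear_combination x * hA - hlinxy
      have h6 : p ∣ s * (A * x - y) := ⟨t * x - u, h5⟩
      have h7 : p ∣ (A * x - y) := (hp.dvd_mul.mp h6).resolve_left hps
      exact emod_eq_of_modEq (modEq_of_dvd_sub h7) (by linarith) (by linarith)
    have hymodn : ((A * x) % p) % n = j := by
      rw [hymod]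
      refine emod_eq_of_modEq ((modEq_of_dvd_sub ⟨-(k*r), ?_⟩).trans hysj) hj hjn
      linear_combination hydef
    rw [hT]
    simp only [Finset.mem_filter, Finset.mem_Icc]
    exact ⟨⟨hx1, hxb⟩, hxmod, hymodn⟩
  have hcard : (Finset.Icc (0:ℤ) (M-1)).card ≤ T.card := by
    refine Finset.card_le_card_of_injOn (fun k => xs + k * m) ?_ ?_
    · intro k hk
      simp only [Finset.mem_coe, Finset.mem_Icc] at hk
      exact hmem k hk.1 hk.2
    · intro k1 _ k2 _ heq
      have : k1 * m = k2 * m := by dsimp at heq; linarith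
      exact mul_right_cancel₀ (ne_of_gt hm) this
  have h9 : (Finset.Icc (0:ℤ) (M-1)).card = M.toNat := by
    rw [Int.card_Icc]
    congr 1
    ring
  rw [h9] at hcard
  calc p / (r * s * n) = M := rfl
    _ = (M.toNat : ℤ) := (Int.toNat_of_nonneg (by linarith)).symm
    _ ≤ (T.card : ℤ) := by exact_mod_cast hcard

set_option maxHeartbeats 1000000 in
theorem stmt_16 (p n r s t A i j : ℤ) (hp : Prime p) (hodd : Odd p) (hn : 2 ≤ n)
    (hs : 0 < s) (hr : 0 < r) (hrle : r ≤ s) (hrs : Int.gcd r s = 1)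
    (hbig : n < r + s) (hplarge : r * s * n < p)
    (hA : s * A = t * p - r) (hAsize : 2 * |A| < p)
    (hi : 0 ≤ i) (hin : i < n) (hj : 0 ≤ j) (hjn : j < n) :
    p / (r * s * n) ≤
      (((Finset.Icc 1 (p - 1)).filter
          (fun x => x % n = i ∧ ((A * x) % p) % n = j)).card : ℤ) := by
  have hn0 : (0:ℤ) < n := by linarith
  have hrsn2 : (2:ℤ) ≤ r * s * n := by
    calc (2:ℤ) = 1 * 1 * 2 := by ring
      _ ≤ r * s * n := by gcongr <;> omega
  have hp0 : (0:ℤ) < p := by linarith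
  have hsrsn : s ≤ r * s * n := by
    calc s = 1 * s * 1 := by ring
      _ ≤ r * s * n := by gcongr <;> omega
  have hnrsn : n ≤ r * s * n := by
    calc n = 1 * 1 * n := by ring
      _ ≤ r * s * n := by gcongr <;> omega
  have hrrsn : r ≤ r * s * n := by
    calc r = r * 1 * 1 := by ring
      _ ≤ r * s * n := by gcongr <;> omega
  have hsp : s < p := by linarith
  have hrp : r < p := by linarith
  have hnp : n < p := by linarith
  have hco : IsCoprime r s := Int.isCoprime_iff_gcd_eq_one.mpr hrs
  obtain ⟨a', b', hab'⟩ := hco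
  have hpA : ¬ p ∣ A := by
    intro h
    have h2 : p ∣ r := by
      have he : r = t * p - s * A := by linarith
      rw [he]
      exact dvd_sub (Dvd.intro t (mul_comm p t)) (h.mul_left s)
    exact absurd (Int.le_of_dvd hr h2) (by linarith)
  have hpdsn : ¬ p ∣ (s * n) := by
    intro h
    rcases hp.dvd_mul.mp h with h | h
    · exact absurd (Int.le_of_dvd hs h) (by linarith)
    · exact absurd (Int.le_of_dvd hn0 h) (by linarith)
  have hcop : IsCoprime (s * n) p := by
    rw [Int.isCoprime_iff_gcd_eq_one]
    have hpn : p.natAbs.Prime := Int.prime_iff_natAbs_prime.mp hp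
    have hnd : ¬ p.natAbs ∣ (s * n).natAbs := by
      rw [Int.natAbs_dvd_natAbs]
      exact hpdsn
    have h1 := (Nat.Prime.coprime_iff_not_dvd hpn).mpr hnd
    show (s * n).natAbs.gcd p.natAbs = 1
    exact Nat.coprime_comm.mp h1
  obtain ⟨a, b, hab⟩ := hcop
  set z := -(r * i + s * j) * a with hzdef
  set y₀ := j + n * z with hy₀def
  set u₀ := (r * i + s * j) * b with hu₀def
  have h₀ : r * i + s * y₀ = u₀ * p := by
    linear_combination s * hy₀def + (s * n) * hzdef - p * hu₀def - (r * i + s * j) * hab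
  set c := (u₀ - 1) / n with hcdef
  set u := (u₀ - 1) % n + 1 with hudef
  have hu1 : 1 ≤ u := by
    have := Int.emod_nonneg (u₀ - 1) (ne_of_gt hn0)
    omega
  have hun : u ≤ n := by
    have := Int.emod_lt_of_pos (u₀ - 1) hn0
    omega
  have hcu : u₀ - u = c * n := by
    have h := Int.mul_ediv_add_emod (u₀ - 1) n
    linarith [mul_comm n c, h]
  set x₁ := i - c * (n * (a' * p)) with hx₁def
  set y₁ := y₀ - c * (n * (b' * p)) with hy₁def
  have hline₁ : r * x₁ + s * y₁ = u * p := by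
    linear_combination h₀ + r * hx₁def + s * hy₁def - (c * n * p) * hab' + p * hcu
  have hx₁i : x₁ ≡ i [ZMOD n] :=
    modEq_of_dvd_sub ⟨-(c * (a' * p)), by linear_combination hx₁def⟩
  have hy₁j : y₁ ≡ j [ZMOD n] :=
    modEq_of_dvd_sub ⟨z - c * (b' * p), by linear_combination hy₁def + hy₀def⟩
  rcases le_or_gt u s with hus | hsu
  · exact key p n r s t A i j x₁ y₁ u hp hn hs hr hrle hplarge hA hi hin hj hjn
      hu1 hus hline₁ hx₁i hy₁j
  · set i' := (p - i) % n with hi'def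
    set j' := (p - j) % n with hj'def
    have hi'0 : 0 ≤ i' := Int.emod_nonneg _ (ne_of_gt hn0)
    have hi'n : i' < n := Int.emod_lt_of_pos _ hn0
    have hj'0 : 0 ≤ j' := Int.emod_nonneg _ (ne_of_gt hn0)
    have hj'n : j' < n := Int.emod_lt_of_pos _ hn0
    have hkey' := key p n r s t A i' j' (p - x₁) (p - y₁) (r + s - u) hp hn hs hr hrle
      hplarge hA hi'0 hi'n hj'0 hj'n (by omega) (by omega)
      (by linear_combination -hline₁)
      (((Int.ModEq.refl p).sub hx₁i).trans (self_modEq (p - i) n))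
      (((Int.ModEq.refl p).sub hy₁j).trans (self_modEq (p - j) n))
    set T := (Finset.Icc 1 (p - 1)).filter
        (fun x => x % n = i ∧ ((A * x) % p) % n = j) with hT
    set T' := (Finset.Icc 1 (p - 1)).filter
        (fun x => x % n = i' ∧ ((A * x) % p) % n = j') with hT'
    have hsubset : ∀ x' ∈ T', p - x' ∈ T := by
      intro x' hx'
      rw [hT'] at hx'
      rw [hT]
      simp only [Finset.mem_filter, Finset.mem_Icc] at hx' ⊢
      obtain ⟨⟨h1, h2⟩, h3, h4⟩ := hx'
      refine ⟨⟨by omega, by omega⟩, ?_, ?_⟩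
      · have e : x' ≡ (p - i) [ZMOD n] := by
          have e1 : x' ≡ i' [ZMOD n] := by
            show x' % n = i' % n
            rw [h3, hi'def]
            exact (Int.emod_emod_of_dvd _ dvd_rfl).symm
          exact e1.trans (self_modEq (p - i) n).symm
        refine emod_eq_of_modEq (modEq_of_dvd_sub ?_) hi hin
        have h5 : (p - x') - i = (p - i) - x' := by ring
        rw [h5]
        exact e.dvd
      · set w := A * x' % p with hw
        have hw0 : 0 ≤ w := Int.emod_nonneg _ (ne_of_gt hp0)
        have hwp : w < p := Int.emod_lt_of_pos _ hp0
        have hwne : w ≠ 0 := by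
          intro h0
          have hd : p ∣ A * x' := Int.dvd_of_emod_eq_zero (by rw [← hw]; exact h0)
          rcases hp.dvd_mul.mp hd with hh | hh
          · exact hpA hh
          · exact absurd (Int.le_of_dvd (by omega) hh) (by omega)
        have hAwd : p ∣ A * x' - w := by
          refine ⟨A * x' / p, ?_⟩
          have h6 := Int.mul_ediv_add_emod (A * x') p
          linarith [mul_comm p (A * x' / p), h6]
        have hflip : (A * (p - x')) % p = p - w := by
          refine emod_eq_of_modEq (modEq_of_dvd_sub ?_) (by omega) (by omega)
          have h7 : A * (p - x') - (p - w) = p * (A - 1) - (A * x' - w) := by ring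
          rw [h7]
          exact dvd_sub ⟨A - 1, rfl⟩ hAwd
        rw [hflip]
        have e2 : w ≡ (p - j) [ZMOD n] := by
          have e1 : w ≡ j' [ZMOD n] := by
            show w % n = j' % n
            rw [h4, hj'def]
            exact (Int.emod_emod_of_dvd _ dvd_rfl).symm
          exact e1.trans (self_modEq (p - j) n).symm
        refine emod_eq_of_modEq (modEq_of_dvd_sub ?_) hj hjn
        have h8 : (p - w) - j = (p - j) - w := by ring
        rw [h8]
        exact e2.dvd
    have hcard : T'.card ≤ T.card := by
      refine Finset.card_le_card_of_injOn (fun x => p - x) hsubset ?_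
      intro a1 _ a2 _ h
      dsimp at h
      omega
    calc p / (r * s * n) ≤ (T'.card : ℤ) := hkey'
      _ ≤ (T.card : ℤ) := by exact_mod_cast hcard
end

section
/- Let p be an odd prime, n ≥ 2, and A an integer with |A| < p/2, p ∤ A. If p > n³(n+3) and A does not admit a representation A = (t·p - r)/s with integers r, s, t satisfying gcd(r,s) = 1, s > 0, and 1 ≤ |r| + s ≤ n, then for all i, j with 0 ≤ i, j < n there exists x with 1 ≤ x ≤ p-1, x ≡ i (mod n), and least positive residue of A·x mod p congruent to j (mod n). -/
/-!
Put `Q = ⌊(p - n) / n⌋`. It suffices that for every `c` some `u` with `1 ≤ u ≤ Q` has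
`u A ≡ c + d (mod p)` with `0 ≤ d < Q`: then `x = i + n u` works, with `A x mod p = j + n (d + 1)`
for a suitable `c`. Such a covering comes from two points `(q₁, r₁)`, `(q₂, -r₂)` of the lattice
`{(q, r) : q A ≡ r mod p}` with `q₁ + q₂ ≤ Q` and `0 < r₁, r₂ ≤ Q`: stepping `u` by `+q₂` or `-q₁`
keeps it in `[1, q₁ + q₂]` and lowers `d` by `r₂` or `r₁` until `d < Q`. Among lattice bases of
this shape take one with `q₁ + q₂ ≤ Q` maximal; then one subtractive Euclidean step pushes
`q₁ + q₂` past `Q`, and the determinant identity `q₁ r₂ + q₂ r₁ = p` together with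
non-criticality (`q + |r| > n` for every lattice point with `q > 0`) forces both residues below `Q`.
-/

lemma Int.emod_eq_of_dvd_sub {p a b : ℤ} (h : p ∣ a - b) (hb : 0 ≤ b) (hbp : b < p) :
    a % p = b := by
  rw [← (Int.modEq_iff_dvd.mpr h).eq, Int.emod_eq_of_lt hb hbp]

lemma le_of_mul_add_mul_eq {p n Q q₁ r₁ q₂ r₂ : ℤ} (hdet : q₁ * r₂ + q₂ * r₁ = p)
    (hq₁ : 1 ≤ q₁) (hq₂ : 0 ≤ q₂) (hr₁ : 0 ≤ r₁) (hnc : n < q₁ + r₁) (hover : Q < 2 * q₁ + q₂)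
    (hQ₀ : 0 ≤ Q) (hQ : p + 2 * n ^ 2 < (n + 1) * (Q + 1)) : r₂ ≤ Q := by
  by_contra! hr₂
  have hr₂q : q₁ * (Q + 1) ≤ q₁ * r₂ := by nlinarith
  rcases le_or_gt q₁ n with hq₁n | hnq₁
  · have hq₂r₁ : (Q + 1 - 2 * q₁) * (n + 1 - q₁) ≤ q₂ * r₁ := by nlinarith
    have hq₁sq : q₁ * (n + 1 - q₁) ≤ n ^ 2 := by nlinarith
    nlinarith
  · nlinarith

/-- Lattice points `(q₁, r₁)` and `(q₂, -r₂)` of `{(q, r) : p ∣ q A - r}`; `det` says they form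
a basis. -/
structure FareyPair (p A : ℤ) where
  q₁ : ℤ
  r₁ : ℤ
  q₂ : ℤ
  r₂ : ℤ
  one_le_q₁ : 1 ≤ q₁
  one_le_q₂ : 1 ≤ q₂
  one_le_r₁ : 1 ≤ r₁
  one_le_r₂ : 1 ≤ r₂
  dvd₁ : p ∣ q₁ * A - r₁
  dvd₂ : p ∣ q₂ * A + r₂
  det : q₁ * r₂ + q₂ * r₁ = p

namespace FareyPair

variable {p A : ℤ}

def initial (hp : 0 < p) (hpA : ¬ p ∣ A) : FareyPair p A where
  q₁ := 1
  r₁ := A % p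
  q₂ := 1
  r₂ := p - A % p
  one_le_q₁ := le_rfl
  one_le_q₂ := le_rfl
  one_le_r₁ := by
    have := Int.emod_nonneg A hp.ne'
    have : A % p ≠ 0 := fun h => hpA (Int.dvd_of_emod_eq_zero h)
    omega
  one_le_r₂ := by linarith [Int.emod_lt_of_pos A hp]
  dvd₁ := by simpa using Int.dvd_self_sub_emod
  dvd₂ := by
    have h : p ∣ A - A % p := Int.dvd_self_sub_emod
    rw [show 1 * A + (p - A % p) = A - A % p + p by ring]
    exact dvd_add h (dvd_refl p)
  det := by ring

def stepLeft (F : FareyPair p A) (h : F.r₁ < F.r₂) : FareyPair p A where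
  q₁ := F.q₁
  r₁ := F.r₁
  q₂ := F.q₁ + F.q₂
  r₂ := F.r₂ - F.r₁
  one_le_q₁ := F.one_le_q₁
  one_le_q₂ := by linarith [F.one_le_q₁, F.one_le_q₂]
  one_le_r₁ := F.one_le_r₁
  one_le_r₂ := by linarith
  dvd₁ := F.dvd₁
  dvd₂ := by
    have := dvd_add F.dvd₁ F.dvd₂
    ring_nf at this ⊢
    exact this
  det := by linear_combination F.det

def stepRight (F : FareyPair p A) (h : F.r₂ < F.r₁) : FareyPair p A where
  q₁ := F.q₁ + F.q₂
  r₁ := F.r₁ - F.r₂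
  q₂ := F.q₂
  r₂ := F.r₂
  one_le_q₁ := by linarith [F.one_le_q₁, F.one_le_q₂]
  one_le_q₂ := F.one_le_q₂
  one_le_r₁ := by linarith
  one_le_r₂ := F.one_le_r₂
  dvd₁ := by
    have := dvd_add F.dvd₁ F.dvd₂
    ring_nf at this ⊢
    exact this
  dvd₂ := F.dvd₂
  det := by linear_combination F.det

lemma pos (F : FareyPair p A) : 0 < p := by
  rw [← F.det]
  nlinarith [F.one_le_q₁, F.one_le_q₂, F.one_le_r₁, F.one_le_r₂]

lemma exists_emod_lt (F : FareyPair p A) {G : ℤ} (h₁ : F.r₁ ≤ G) (h₂ : F.r₂ ≤ G) (c : ℤ) :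
    ∃ u, 1 ≤ u ∧ u ≤ F.q₁ + F.q₂ ∧ (u * A - c) % p < G := by
  have hq₁ := F.one_le_q₁
  have hq₂ := F.one_le_q₂
  have hr₁ := F.one_le_r₁
  have hr₂ := F.one_le_r₂
  obtain ⟨u, hu, hmin⟩ := (Finset.Icc 1 (F.q₁ + F.q₂)).exists_min_image
    (fun u => (u * A - c) % p) ⟨1, by simp only [Finset.mem_Icc]; omega⟩
  simp only [Finset.mem_Icc] at hu hmin
  refine ⟨u, hu.1, hu.2, ?_⟩
  by_contra! hG
  set d := (u * A - c) % p
  have hd : p ∣ u * A - c - d := Int.dvd_self_sub_emod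
  have hdp : d < p := Int.emod_lt_of_pos _ F.pos
  by_cases hu₁ : u ≤ F.q₁
  · have hdvd : p ∣ (u + F.q₂) * A - c - (d - F.r₂) := by
      have := dvd_add hd F.dvd₂
      ring_nf at this ⊢
      exact this
    have := hmin (u + F.q₂) ⟨by omega, by omega⟩
    rw [Int.emod_eq_of_dvd_sub hdvd (by omega) (by omega)] at this
    omega
  · have hdvd : p ∣ (u - F.q₁) * A - c - (d - F.r₁) := by
      have := dvd_sub hd F.dvd₁
      ring_nf at this ⊢
      exact this
    have := hmin (u - F.q₁) ⟨by omega, by omega⟩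
    rw [Int.emod_eq_of_dvd_sub hdvd (by omega) (by omega)] at this
    omega

theorem exists_le {n Q : ℤ} (hp : Prime p) (hpA : ¬ p ∣ A)
    (hnc : ∀ s t, 0 < s → p ∣ s * A + t → n < s + |t|)
    (hQ2 : 2 ≤ Q) (hQp : Q < p) (hQ : p + 2 * n ^ 2 < (n + 1) * (Q + 1)) :
    ∃ F : FareyPair p A, F.q₁ + F.q₂ ≤ Q ∧ F.r₁ ≤ Q ∧ F.r₂ ≤ Q := by
  classical
  obtain ⟨k, ⟨F, rfl, hFQ⟩, hmax⟩ := Int.exists_greatest_of_bdd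
    (P := fun k => ∃ F : FareyPair p A, F.q₁ + F.q₂ = k ∧ k ≤ Q)
    ⟨Q, fun _ ⟨_, _, h⟩ => h⟩ ⟨2, initial (by omega) hpA, rfl, hQ2⟩
  have hq₁ := F.one_le_q₁
  have hq₂ := F.one_le_q₂
  have hnc₁ : n < F.q₁ + F.r₁ := by
    simpa [abs_of_pos (F.one_le_r₁.trans_lt' one_pos)] using
      hnc F.q₁ (-F.r₁) (by omega) (by simpa [sub_eq_add_neg] using F.dvd₁)
  have hnc₂ : n < F.q₂ + F.r₂ := by
    simpa [abs_of_pos (F.one_le_r₂.trans_lt' one_pos)] using hnc F.q₂ F.r₂ (by omega) F.dvd₂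
  refine ⟨F, hFQ, ?_⟩
  rcases lt_trichotomy F.r₁ F.r₂ with h | h | h
  · have hover : Q < 2 * F.q₁ + F.q₂ := by
      by_contra! hle
      have := hmax _ ⟨F.stepLeft h, by simp only [stepLeft]; ring, hle⟩
      omega
    have := le_of_mul_add_mul_eq F.det hq₁ (by omega) (by linarith [F.one_le_r₁]) hnc₁ hover
      (by omega) hQ
    omega
  · -- equal residues would make `(q₁ + q₂) A ≡ 0 mod p` with `0 < q₁ + q₂ < p`
    have hdvd : p ∣ (F.q₁ + F.q₂) * A := by
      have := dvd_add F.dvd₁ F.dvd₂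
      rwa [h, sub_add_add_cancel, ← add_mul] at this
    have := Int.le_of_dvd (by omega) ((hp.dvd_or_dvd hdvd).resolve_right hpA)
    omega
  · have hover : Q < F.q₁ + 2 * F.q₂ := by
      by_contra! hle
      have := hmax _ ⟨F.stepRight h, by simp only [stepRight]; ring, hle⟩
      omega
    have := le_of_mul_add_mul_eq (q₁ := F.q₂) (r₁ := F.r₂) (q₂ := F.q₁) (r₂ := F.r₁)
      (by linear_combination F.det) hq₂ (by omega) (by linarith [F.one_le_r₂]) hnc₂ (by linarith)
      (by omega) hQ
    omega

end FareyPair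

lemma exists_coprime_of_dvd_mul_add {p A s t : ℤ} (hp : Prime p) (hs : 0 < s) (hsp : s < p)
    (h : p ∣ s * A + t) :
    ∃ r' s' t', Int.gcd r' s' = 1 ∧ 0 < s' ∧ |r'| + s' ≤ |t| + s ∧ s' * A = t' * p - r' := by
  obtain ⟨g, r', s', hg, hcop, rfl, rfl⟩ :=
    Int.exists_gcd_one' (Int.gcd_pos_of_ne_zero_right t hs.ne')
  have hg : (0 : ℤ) < g := by exact_mod_cast hg
  have hs' : 0 < s' := pos_of_mul_pos_left hs hg.le
  have hpg : ¬ p ∣ g := fun hpg => by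
    have := Int.le_of_dvd hg hpg
    nlinarith
  obtain ⟨t', ht'⟩ : p ∣ s' * A + r' := by
    refine (hp.dvd_or_dvd ?_).resolve_left hpg
    rwa [show (g : ℤ) * (s' * A + r') = s' * g * A + r' * g by ring]
  refine ⟨r', s', t', hcop, hs', ?_, by linarith⟩
  rw [abs_mul, abs_of_pos hg]
  nlinarith [abs_nonneg r']

lemma lt_add_abs_of_dvd_mul_add {p n A : ℤ} (hp : Prime p) (hnp : n < p)
    (hnotcrit : ¬ ∃ r s t : ℤ, Int.gcd r s = 1 ∧ 0 < s ∧
      1 ≤ |r| + s ∧ |r| + s ≤ n ∧ s * A = t * p - r)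
    {s t : ℤ} (hs : 0 < s) (h : p ∣ s * A + t) : n < s + |t| := by
  by_contra! hle
  obtain ⟨r', s', t', hcop, hs', hle', heq⟩ :=
    exists_coprime_of_dvd_mul_add hp hs (by linarith [abs_nonneg t]) h
  exact hnotcrit ⟨r', s', t', hcop, hs', by linarith [abs_nonneg r'], by linarith, heq⟩

lemma exists_emod_emod_eq_of_covering {p n A Q : ℤ} (hn : 0 < n) (hnQ : n * Q ≤ p - n)
    (hcop : IsCoprime n p) (hcover : ∀ c, ∃ u, 1 ≤ u ∧ u ≤ Q ∧ (u * A - c) % p < Q)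
    {i j : ℤ} (hi : 0 ≤ i) (hin : i < n) (hj : 0 ≤ j) (hjn : j < n) :
    ∃ x : ℤ, 1 ≤ x ∧ x ≤ p - 1 ∧ x % n = i ∧ ((A * x) % p) % n = j := by
  obtain ⟨α, β, hαβ⟩ := hcop
  -- `c ≡ n⁻¹ (j - A i) + 1`, so that `A (i + n u) ≡ j + n (d + 1)` where `d = (u A - c) % p`
  obtain ⟨u, hu₁, huQ, hd⟩ := hcover (α * (j - A * i) + 1)
  set d := (u * A - (α * (j - A * i) + 1)) % p
  have hp : 0 < p := by nlinarith
  have hd₀ : 0 ≤ d := Int.emod_nonneg _ hp.ne'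
  obtain ⟨k, hk⟩ : p ∣ u * A - (α * (j - A * i) + 1) - d := Int.dvd_self_sub_emod
  have hAx : A * (i + n * u) % p = j + n * (d + 1) := by
    refine Int.emod_eq_of_dvd_sub ⟨n * k - β * (j - A * i), ?_⟩ (by nlinarith) (by nlinarith)
    linear_combination n * hk + (j - A * i) * hαβ
  refine ⟨i + n * u, by nlinarith, by nlinarith, ?_, ?_⟩
  · rw [Int.add_mul_emod_self_left, Int.emod_eq_of_lt hi hin]
  · rw [hAx, Int.add_mul_emod_self_left, Int.emod_eq_of_lt hj hjn]

theorem stmt_19_general (p n A : ℤ) (hp : Prime p) (hn : 2 ≤ n)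
    (hpA : ¬ p ∣ A)
    (hplarge : n ^ 3 * (n + 3) < p)
    (hnotcrit : ¬ ∃ r s t : ℤ, Int.gcd r s = 1 ∧ 0 < s ∧
      1 ≤ |r| + s ∧ |r| + s ≤ n ∧ s * A = t * p - r) :
    ∀ i j : ℤ, 0 ≤ i → i < n → 0 ≤ j → j < n →
      ∃ x : ℤ, 1 ≤ x ∧ x ≤ p - 1 ∧ x % n = i ∧ ((A * x) % p) % n = j := by
  intro i j hi hin hj hjn
  have hn₀ : 0 < n := by omega
  have hnp : n < p := by nlinarith [one_le_pow₀ (M₀ := ℤ) (n := 3) (by omega : 1 ≤ n)]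
  set Q := (p - n) / n
  have hnQ : n * Q ≤ p - n := by linarith [Int.ediv_mul_le (p - n) hn₀.ne']
  have hQ_big : n ^ 3 + 3 * n ^ 2 - 1 ≤ Q := by
    have := Int.lt_ediv_add_one_mul_self (p - n) hn₀
    nlinarith
  obtain ⟨F, hFQ, hr₁, hr₂⟩ := FareyPair.exists_le hp hpA
    (fun _ _ hs h => lt_add_abs_of_dvd_mul_add hp hnp hnotcrit hs h) (by nlinarith) (by nlinarith)
    (by nlinarith [Int.lt_ediv_add_one_mul_self (p - n) hn₀])
  have hcop : IsCoprime n p :=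
    ((Prime.coprime_iff_not_dvd hp).mpr fun h => by linarith [Int.le_of_dvd hn₀ h]).symm
  refine exists_emod_emod_eq_of_covering hn₀ hnQ hcop (fun c => ?_) hi hin hj hjn
  obtain ⟨u, hu₁, hu₂, hu⟩ := F.exists_emod_lt hr₁ hr₂ c
  exact ⟨u, hu₁, hu₂.trans hFQ, hu⟩

theorem stmt_19 (p n A : ℤ) (hp : Prime p) (hodd : Odd p) (hn : 2 ≤ n)
    (hAsize : 2 * |A| < p) (hpA : ¬ p ∣ A)
    (hplarge : n ^ 3 * (n + 3) < p)
    (hnotcrit : ¬ ∃ r s t : ℤ, Int.gcd r s = 1 ∧ 0 < s ∧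
      1 ≤ |r| + s ∧ |r| + s ≤ n ∧ s * A = t * p - r) :
    ∀ i j : ℤ, 0 ≤ i → i < n → 0 ≤ j → j < n →
      ∃ x : ℤ, 1 ≤ x ∧ x ≤ p - 1 ∧ x % n = i ∧ ((A * x) % p) % n = j :=
  stmt_19_general p n A hp hn hpA hplarge hnotcrit
end
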